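/- arXiv:1807.00536 — 7 statements merged into one kernel-verified Lean document; each statement's English description precedes it below -/
import Mathlib

section
/- Let H⁺, H⁻, w ∈ ℝ² satisfy (H⁺ × w)² + (H⁻ × w)² < 2 (H⁺ × H⁻)², where a × b := a₁b₂ − a₂b₁. Then for every unit vector ξ ∈ ℝ² one has (ξ · w)² < 2 (ξ · H⁺)² + 2 (ξ · H⁻)². -/
/-- Planar cross product `a × b = a₁ b₂ − a₂ b₁`. -/
noncomputable def cross2 (a b : Fin 2 → ℝ) : ℝ := a 0 * b 1 - a 1 * b 0

lemma key_alg (p q s t u v : ℝ)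
    (h : (p*t - u*s)^2 + (q*t - v*s)^2 < 2*(p*v - u*q)^2) :
    s^2 < 2*p^2 + 2*q^2 := by
  have hC : 0 < (p*v - u*q)^2 := by
    nlinarith [sq_nonneg (p*t - u*s), sq_nonneg (q*t - v*s)]
  have hpq : 0 < p^2 + q^2 := by
    rcases lt_or_eq_of_le (by positivity : (0:ℝ) ≤ p^2 + q^2) with h' | h'
    · exact h'
    · exfalso
      have hp : p = 0 := by nlinarith [sq_nonneg p, sq_nonneg q]
      have hq : q = 0 := by nlinarith [sq_nonneg p, sq_nonneg q]
      rw [hp, hq] at hC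
      simp at hC
  nlinarith [mul_pos (show 0 < 2*(p*v - u*q)^2 - ((p*t - u*s)^2 + (q*t - v*s)^2) by linarith) hpq,
    sq_nonneg ((p*t - u*s)*p + (q*t - v*s)*q),
    sq_nonneg ((p*t - u*s)*q - (q*t - v*s)*p)]

theorem stmt1 (Hp Hm w : Fin 2 → ℝ)
    (hstab : (cross2 Hp w) ^ 2 + (cross2 Hm w) ^ 2 < 2 * (cross2 Hp Hm) ^ 2)
    (ξ : Fin 2 → ℝ) (hξ : ξ 0 ^ 2 + ξ 1 ^ 2 = 1) :
    (ξ 0 * w 0 + ξ 1 * w 1) ^ 2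
      < 2 * (ξ 0 * Hp 0 + ξ 1 * Hp 1) ^ 2 + 2 * (ξ 0 * Hm 0 + ξ 1 * Hm 1) ^ 2 := by
  set p := ξ 0 * Hp 0 + ξ 1 * Hp 1 with hp
  set q := ξ 0 * Hm 0 + ξ 1 * Hm 1 with hq
  set s := ξ 0 * w 0 + ξ 1 * w 1 with hs
  set u := -(ξ 1) * Hp 0 + ξ 0 * Hp 1 with hu
  set v := -(ξ 1) * Hm 0 + ξ 0 * Hm 1 with hv
  set t := -(ξ 1) * w 0 + ξ 0 * w 1 with ht
  have h1 : cross2 Hp w = p*t - u*s := by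
    simp only [cross2, hp, hu, hs, ht]
    linear_combination -(Hp 0 * w 1 - Hp 1 * w 0) * hξ
  have h2 : cross2 Hm w = q*t - v*s := by
    simp only [cross2, hq, hv, hs, ht]
    linear_combination -(Hm 0 * w 1 - Hm 1 * w 0) * hξ
  have h3 : cross2 Hp Hm = p*v - u*q := by
    simp only [cross2, hp, hu, hq, hv]
    linear_combination -(Hp 0 * Hm 1 - Hp 1 * Hm 0) * hξ
  rw [h1, h2, h3] at hstab
  exact key_alg p q s t u v hstab
end

section
/- Let ξ = (ξ₁, ξ₂) ∈ ℝ² with ξ₁² + ξ₂² = 1, let u⁰, H⁰ ∈ ℝ², τ ∈ ℝ, and set a = ξ·u⁰, b = ξ·H⁰, c = τ + a. Define the vectors in ℂ⁷: R = (ξ₁c, ξ₂c, i c, ξ₁b, ξ₂b, i b, b² − c²) and L = (ξ₁τ, ξ₂τ, i τ, 2ξ₁b, 2ξ₂b, 2 i b, −τ(a + c)). Let A₃ be the linear map on ℂ⁷ sending U = (u₁,u₂,u₃,H₁,H₂,H₃,q) to (u⁰₁u₃ − H⁰₁H₃, u⁰₂u₃ − H⁰₂H₃, q, H⁰₁u₃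 − u⁰₁H₃, H⁰₂u₃ − u⁰₂H₃, 0, u₃). Then the Hermitian product conj(L)ᵀ (A₃ R) = 0. -/
open Complex

/-- Right surface-wave eigenvector `𝓡`. -/
noncomputable def Rvec (ξ₁ ξ₂ b c : ℝ) : Fin 7 → ℂ :=
  ![(ξ₁ : ℂ) * (c : ℂ), (ξ₂ : ℂ) * (c : ℂ), Complex.I * (c : ℂ),
    (ξ₁ : ℂ) * (b : ℂ), (ξ₂ : ℂ) * (b : ℂ), Complex.I * (b : ℂ),
    (b : ℂ) ^ 2 - (c : ℂ) ^ 2]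

/-- Left surface-wave eigenvector `𝓛`. -/
noncomputable def Lvec (ξ₁ ξ₂ τ a b c : ℝ) : Fin 7 → ℂ :=
  ![(ξ₁ : ℂ) * (τ : ℂ), (ξ₂ : ℂ) * (τ : ℂ), Complex.I * (τ : ℂ),
    2 * (ξ₁ : ℂ) * (b : ℂ), 2 * (ξ₂ : ℂ) * (b : ℂ), 2 * Complex.I * (b : ℂ),
    -(τ : ℂ) * ((a : ℂ) + (c : ℂ))]

/-- The Jacobian `A₃` of the normal flux of conservative incompressible MHD. -/
noncomputable def A3map (u₁ u₂ h₁ h₂ : ℝ) (U : Fin 7 → ℂ) : Fin 7 → ℂ :=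
  ![(u₁ : ℂ) * U 2 - (h₁ : ℂ) * U 5, (u₂ : ℂ) * U 2 - (h₂ : ℂ) * U 5, U 6,
    (h₁ : ℂ) * U 2 - (u₁ : ℂ) * U 5, (h₂ : ℂ) * U 2 - (u₂ : ℂ) * U 5, 0, U 2]

theorem stmt8 (ξ₁ ξ₂ u₁ u₂ h₁ h₂ τ a b c : ℝ)
    (hξ : ξ₁ ^ 2 + ξ₂ ^ 2 = 1)
    (ha : a = ξ₁ * u₁ + ξ₂ * u₂) (hb : b = ξ₁ * h₁ + ξ₂ * h₂) (hc : c = τ + a) :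
    ∑ i : Fin 7, starRingEnd ℂ (Lvec ξ₁ ξ₂ τ a b c i)
      * A3map u₁ u₂ h₁ h₂ (Rvec ξ₁ ξ₂ b c) i = 0 := by
  have ha' : (a:ℂ) = ξ₁ * u₁ + ξ₂ * u₂ := by exact_mod_cast congrArg Complex.ofReal ha
  have hb' : (b:ℂ) = ξ₁ * h₁ + ξ₂ * h₂ := by exact_mod_cast congrArg Complex.ofReal hb
  have hc' : (c:ℂ) = τ + a := by exact_mod_cast congrArg Complex.ofReal hc
  have L0 : Lvec ξ₁ ξ₂ τ a b c 0 = (ξ₁:ℂ)*τ := rfl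
  have L1 : Lvec ξ₁ ξ₂ τ a b c 1 = (ξ₂:ℂ)*τ := rfl
  have L2 : Lvec ξ₁ ξ₂ τ a b c 2 = Complex.I*τ := rfl
  have L3 : Lvec ξ₁ ξ₂ τ a b c 3 = 2*(ξ₁:ℂ)*b := rfl
  have L4 : Lvec ξ₁ ξ₂ τ a b c 4 = 2*(ξ₂:ℂ)*b := rfl
  have L5 : Lvec ξ₁ ξ₂ τ a b c 5 = 2*Complex.I*b := rfl
  have L6 : Lvec ξ₁ ξ₂ τ a b c 6 = -(τ:ℂ)*((a:ℂ)+c) := rfl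
  have A0 : A3map u₁ u₂ h₁ h₂ (Rvec ξ₁ ξ₂ b c) 0 = (u₁:ℂ)*(Complex.I*c)-(h₁:ℂ)*(Complex.I*b) := rfl
  have A1 : A3map u₁ u₂ h₁ h₂ (Rvec ξ₁ ξ₂ b c) 1 = (u₂:ℂ)*(Complex.I*c)-(h₂:ℂ)*(Complex.I*b) := rfl
  have A2 : A3map u₁ u₂ h₁ h₂ (Rvec ξ₁ ξ₂ b c) 2 = (b:ℂ)^2-(c:ℂ)^2 := rfl
  have A3 : A3map u₁ u₂ h₁ h₂ (Rvec ξ₁ ξ₂ b c) 3 = (h₁:ℂ)*(Complex.I*c)-(u₁:ℂ)*(Complex.I*b) := rfl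
  have A4 : A3map u₁ u₂ h₁ h₂ (Rvec ξ₁ ξ₂ b c) 4 = (h₂:ℂ)*(Complex.I*c)-(u₂:ℂ)*(Complex.I*b) := rfl
  have A5 : A3map u₁ u₂ h₁ h₂ (Rvec ξ₁ ξ₂ b c) 5 = 0 := rfl
  have A6 : A3map u₁ u₂ h₁ h₂ (Rvec ξ₁ ξ₂ b c) 6 = Complex.I*c := rfl
  simp only [Fin.sum_univ_seven, L0, L1, L2, L3, L4, L5, L6, A0, A1, A2, A3, A4, A5, A6,
    map_mul, map_ofNat, Complex.conj_ofReal, Complex.conj_I, map_neg, map_add]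
  linear_combination (-(Complex.I * ((τ:ℂ) * c - 2 * b ^ 2))) * ha'
    + (-(Complex.I * (2 * (b:ℂ) * c - τ * b))) * hb'
    + (2 * Complex.I * (b:ℂ) ^ 2) * hc'
end

section
/- Let ξ = (ξ₁, ξ₂) ∈ ℝ² with ξ₁² + ξ₂² = 1, u⁰, H⁰ ∈ ℝ², τ ∈ ℝ, a = ξ·u⁰, b = ξ·H⁰, c = τ + a. Let A₃ be as in the context, and let 𝒜 be the linear map on ℂ⁷ sending U = (u₁,u₂,u₃,H₁,H₂,H₃,q) to the vector with components: for j = 1,2, c·u_j + u⁰_j(ξ₁u₁+ξ₂u₂) − b·H_j − H⁰_j(ξ₁H₁+ξ₂H₂) + ξ_j q; third component c·u₃ − b·H₃; for j = 1,2, components 3+j given by c·H_j + H⁰_j(ξ₁u₁+ξ₂u₂) − b·u_j − u⁰_j(ξ₁H₁+ξ₂H₂); sixth component −b·u₃ + c·H₃; seventh component ξ₁u₁+ξ₂u₂. Then the vector R = (ξ₁c, ξ₂c, i c, ξ₁b, ξ₂b, i b, b² − c²) ∈ ℂ⁷ satisfies A₃ R = i·𝒜 R; equivalently, (−A₃ +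 i 𝒜) R = 0. -/
/-- The fast tangential symbol `𝒜 = τA₀ + ξ₁A₁ + ξ₂A₂`. -/
noncomputable def Acal (ξ₁ ξ₂ u₁ u₂ h₁ h₂ b c : ℝ) (U : Fin 7 → ℂ) : Fin 7 → ℂ :=
  ![(c : ℂ) * U 0 + (u₁ : ℂ) * ((ξ₁ : ℂ) * U 0 + (ξ₂ : ℂ) * U 1)
      - (b : ℂ) * U 3 - (h₁ : ℂ) * ((ξ₁ : ℂ) * U 3 + (ξ₂ : ℂ) * U 4) + (ξ₁ : ℂ) * U 6,
    (c : ℂ) * U 1 + (u₂ : ℂ) * ((ξ₁ : ℂ) * U 0 + (ξ₂ : ℂ) * U 1)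
      - (b : ℂ) * U 4 - (h₂ : ℂ) * ((ξ₁ : ℂ) * U 3 + (ξ₂ : ℂ) * U 4) + (ξ₂ : ℂ) * U 6,
    (c : ℂ) * U 2 - (b : ℂ) * U 5,
    (c : ℂ) * U 3 + (h₁ : ℂ) * ((ξ₁ : ℂ) * U 0 + (ξ₂ : ℂ) * U 1)
      - (b : ℂ) * U 0 - (u₁ : ℂ) * ((ξ₁ : ℂ) * U 3 + (ξ₂ : ℂ) * U 4),
    (c : ℂ) * U 4 + (h₂ : ℂ) * ((ξ₁ : ℂ) * U 0 + (ξ₂ : ℂ) * U 1)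
      - (b : ℂ) * U 1 - (u₂ : ℂ) * ((ξ₁ : ℂ) * U 3 + (ξ₂ : ℂ) * U 4),
    -(b : ℂ) * U 2 + (c : ℂ) * U 5,
    (ξ₁ : ℂ) * U 0 + (ξ₂ : ℂ) * U 1]

theorem stmt9 (ξ₁ ξ₂ u₁ u₂ h₁ h₂ τ a b c : ℝ)
    (hξ : ξ₁ ^ 2 + ξ₂ ^ 2 = 1)
    (ha : a = ξ₁ * u₁ + ξ₂ * u₂) (hb : b = ξ₁ * h₁ + ξ₂ * h₂) (hc : c = τ + a) :
    ∀ i : Fin 7, A3map u₁ u₂ h₁ h₂ (Rvec ξ₁ ξ₂ b c) i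
      = Complex.I * Acal ξ₁ ξ₂ u₁ u₂ h₁ h₂ b c (Rvec ξ₁ ξ₂ b c) i := by
  have hξ2 : (ξ₁ : ℂ) ^ 2 + (ξ₂ : ℂ) ^ 2 = 1 := by exact_mod_cast hξ
  intro i
  fin_cases i
  · show (u₁ : ℂ) * (Complex.I * c) - (h₁ : ℂ) * (Complex.I * b)
      = Complex.I * ((c : ℂ) * ((ξ₁ : ℂ) * c) + (u₁ : ℂ) * ((ξ₁ : ℂ) * ((ξ₁ : ℂ) * c) + (ξ₂ : ℂ) * ((ξ₂ : ℂ) * c))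
          - (b : ℂ) * ((ξ₁ : ℂ) * b) - (h₁ : ℂ) * ((ξ₁ : ℂ) * ((ξ₁ : ℂ) * b) + (ξ₂ : ℂ) * ((ξ₂ : ℂ) * b))
          + (ξ₁ : ℂ) * ((b : ℂ) ^ 2 - (c : ℂ) ^ 2))
    linear_combination (-(Complex.I * ((c : ℂ) * u₁ - (b : ℂ) * h₁))) * hξ2
  · show (u₂ : ℂ) * (Complex.I * c) - (h₂ : ℂ) * (Complex.I * b)
      = Complex.I * ((c : ℂ) * ((ξ₂ : ℂ) * c) + (u₂ : ℂ) * ((ξ₁ : ℂ) * ((ξ₁ : ℂ) * c) + (ξ₂ : ℂ) * ((ξ₂ : ℂ) * c))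
          - (b : ℂ) * ((ξ₂ : ℂ) * b) - (h₂ : ℂ) * ((ξ₁ : ℂ) * ((ξ₁ : ℂ) * b) + (ξ₂ : ℂ) * ((ξ₂ : ℂ) * b))
          + (ξ₂ : ℂ) * ((b : ℂ) ^ 2 - (c : ℂ) ^ 2))
    linear_combination (-(Complex.I * ((c : ℂ) * u₂ - (b : ℂ) * h₂))) * hξ2
  · show (b : ℂ) ^ 2 - (c : ℂ) ^ 2 = Complex.I * ((c : ℂ) * (Complex.I * c) - (b : ℂ) * (Complex.I * b))
    linear_combination ((b : ℂ) ^ 2 - (c : ℂ) ^ 2) * Complex.I_sq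
  · show (h₁ : ℂ) * (Complex.I * c) - (u₁ : ℂ) * (Complex.I * b)
      = Complex.I * ((c : ℂ) * ((ξ₁ : ℂ) * b) + (h₁ : ℂ) * ((ξ₁ : ℂ) * ((ξ₁ : ℂ) * c) + (ξ₂ : ℂ) * ((ξ₂ : ℂ) * c))
          - (b : ℂ) * ((ξ₁ : ℂ) * c) - (u₁ : ℂ) * ((ξ₁ : ℂ) * ((ξ₁ : ℂ) * b) + (ξ₂ : ℂ) * ((ξ₂ : ℂ) * b)))
    linear_combination (-(Complex.I * ((c : ℂ) * h₁ - (b : ℂ) * u₁))) * hξ2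
  · show (h₂ : ℂ) * (Complex.I * c) - (u₂ : ℂ) * (Complex.I * b)
      = Complex.I * ((c : ℂ) * ((ξ₂ : ℂ) * b) + (h₂ : ℂ) * ((ξ₁ : ℂ) * ((ξ₁ : ℂ) * c) + (ξ₂ : ℂ) * ((ξ₂ : ℂ) * c))
          - (b : ℂ) * ((ξ₂ : ℂ) * c) - (u₂ : ℂ) * ((ξ₁ : ℂ) * ((ξ₁ : ℂ) * b) + (ξ₂ : ℂ) * ((ξ₂ : ℂ) * b)))
    linear_combination (-(Complex.I * ((c : ℂ) * h₂ - (b : ℂ) * u₂))) * hξ2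
  · show (0 : ℂ) = Complex.I * (-(b : ℂ) * (Complex.I * c) + (c : ℂ) * (Complex.I * b))
    ring
  · show Complex.I * (c : ℂ) = Complex.I * ((ξ₁ : ℂ) * ((ξ₁ : ℂ) * c) + (ξ₂ : ℂ) * ((ξ₂ : ℂ) * c))
    linear_combination (-(Complex.I * (c : ℂ))) * hξ2
end

section
/- For every integer L ≥ 1 and all real numbers η₀, η₁, …, η_{L+1}: (L+1)·(η₀ + η₁ + ⋯ + η_{L+1})^L = (1/2) · Σ over all subsets F of {0, 1, …, L+1} with 1 ≤ #F ≤ L+1, of (Σ_{i∈F} ηᵢ)^{#F − 1} · (Σ_{i∉F} ηᵢ)^{(L+2−#F) − 1}. -/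
/-!
Write `φ_x(A) = x (x + η_A)^(#A - 1)`, with `φ_x(∅) = 1`. Hurwitz's identity
`∑_{A ⊆ S} φ_x(A) (y + η_{S∖A})^#(S∖A) = (x + y + η_S)^#S` and the convolution identity
`∑_{A ⊆ S} φ_x(A) φ_y(S∖A) = φ_{x+y}(S)` are proved together by induction on `S`. Taking `S` the
whole index set and `x = y = t`, the proper nonempty `A` contribute `t² Q(t)`, where `Q(0)` is twice
the right-hand side of the theorem, so `t Q(t) = 2 (2t + s)^(L+1) - 2 (t + s)^(L+1)` and `Q(0)` is
the derivative of the right-hand side at `0`, namely `2 (L + 1) s^L`.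
-/

open Finset

lemma sum_powerset_sdiff_comm {ι M : Type*} [DecidableEq ι] [AddCommMonoid M] (S : Finset ι)
    (f : Finset ι → Finset ι → M) :
    ∑ A ∈ S.powerset, f A (S \ A) = ∑ A ∈ S.powerset, f (S \ A) A :=
  sum_nbij' (S \ ·) (S \ ·) (fun _ _ => mem_powerset.2 sdiff_subset)
    (fun _ _ => mem_powerset.2 sdiff_subset)
    (fun _ hA => Finset.sdiff_sdiff_eq_self (mem_powerset.1 hA))
    (fun _ hA => Finset.sdiff_sdiff_eq_self (mem_powerset.1 hA))
    (fun _ hA => by rw [Finset.sdiff_sdiff_eq_self (mem_powerset.1 hA)])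

section Abel

variable {ι R : Type*} [DecidableEq ι] [CommSemiring R] (η : ι → R)

/-- For `η ≡ 1` these are the Abel polynomials `x (x + n)^(n - 1)`. -/
noncomputable def abelPoly (x : R) (A : Finset ι) : R :=
  if A = ∅ then 1 else x * (x + ∑ i ∈ A, η i) ^ (#A - 1)

@[simp]
lemma abelPoly_empty (x : R) : abelPoly η x ∅ = 1 := if_pos rfl

lemma abelPoly_of_nonempty (x : R) {A : Finset ι} (hA : A.Nonempty) :
    abelPoly η x A = x * (x + ∑ i ∈ A, η i) ^ (#A - 1) :=
  if_neg hA.ne_empty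

lemma abelPoly_insert (x : R) {a : ι} {A : Finset ι} (ha : a ∉ A) :
    abelPoly η x (insert a A) = x * (x + η a + ∑ i ∈ A, η i) ^ #A := by
  rw [abelPoly_of_nonempty η x (insert_nonempty a A), sum_insert ha, card_insert_of_notMem ha,
    Nat.add_sub_cancel, add_assoc]

lemma pow_card_eq_abelPoly_add (y : R) (B : Finset ι) :
    (y + ∑ i ∈ B, η i) ^ #B =
      abelPoly η y B + (∑ i ∈ B, η i) * (y + ∑ i ∈ B, η i) ^ (#B - 1) := by
  rcases B.eq_empty_or_nonempty with rfl | hB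
  · simp
  rw [abelPoly_of_nonempty η y hB, ← add_mul, ← pow_succ', Nat.sub_add_cancel hB.card_pos]

/-- Hurwitz's multivariate form of Abel's identity. -/
def AbelIdentity (S : Finset ι) : Prop :=
  ∀ x y : R, ∑ A ∈ S.powerset, abelPoly η x A * (y + ∑ i ∈ S \ A, η i) ^ #(S \ A) =
    (x + y + ∑ i ∈ S, η i) ^ #S

lemma sum_powerset_insert_abelPoly_mul_abelPoly {a : ι} {S : Finset ι} (ha : a ∉ S)
    (hS : AbelIdentity η S) (u v : R) :
    ∑ A ∈ (insert a S).powerset, abelPoly η u A * abelPoly η v (insert a S \ A) =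
      abelPoly η (u + v) (insert a S) := by
  have half : ∀ u v : R, ∑ A ∈ S.powerset, abelPoly η u A * abelPoly η v (insert a (S \ A)) =
      v * (u + (v + η a) + ∑ i ∈ S, η i) ^ #S := by
    intro u v
    rw [← hS u (v + η a), mul_sum]
    refine sum_congr rfl fun A _ => ?_
    rw [abelPoly_insert η v fun h => ha (mem_sdiff.1 h).1]
    ring
  have without_a : ∑ A ∈ S.powerset, abelPoly η u A * abelPoly η v (insert a S \ A) =
      v * (u + (v + η a) + ∑ i ∈ S, η i) ^ #S := by
    rw [← half]
    refine sum_congr rfl fun A hA => ?_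
    rw [insert_sdiff_of_notMem _ fun h => ha (mem_powerset.1 hA h)]
  have with_a : ∑ A ∈ S.powerset,
      abelPoly η u (insert a A) * abelPoly η v (insert a S \ insert a A) =
      u * (v + (u + η a) + ∑ i ∈ S, η i) ^ #S := by
    simp_rw [insert_sdiff_insert, sdiff_insert_of_notMem ha, mul_comm (abelPoly η u _)]
    rw [← sum_powerset_sdiff_comm S fun B A => abelPoly η v B * abelPoly η u (insert a A), half]
  rw [sum_powerset_insert ha, without_a, with_a, abelPoly_insert η (u + v) ha]
  ring

lemma abelIdentity_of_forall_erase {S : Finset ι} (hS : ∀ b ∈ S, AbelIdentity η (S.erase b)) :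
    AbelIdentity η S := by
  intro x y
  rcases S.eq_empty_or_nonempty with rfl | ⟨a, ha⟩
  · simp
  have hconv : ∑ A ∈ S.powerset, abelPoly η x A * abelPoly η y (S \ A) =
      (x + y) * (x + y + ∑ i ∈ S, η i) ^ (#S - 1) := by
    have := sum_powerset_insert_abelPoly_mul_abelPoly η (notMem_erase a S) (hS a ha) x y
    rwa [insert_erase ha, abelPoly_of_nonempty η _ ⟨a, ha⟩] at this
  have hdefect : ∑ A ∈ S.powerset, abelPoly η x A *
      ((∑ i ∈ S \ A, η i) * (y + ∑ i ∈ S \ A, η i) ^ (#(S \ A) - 1)) =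
      (∑ i ∈ S, η i) * (x + y + ∑ i ∈ S, η i) ^ (#S - 1) := calc
    _ = ∑ A ∈ S.powerset, ∑ b ∈ S \ A,
          η b * (abelPoly η x A * (y + ∑ i ∈ S \ A, η i) ^ (#(S \ A) - 1)) := by
      simp_rw [sum_mul, mul_sum, mul_left_comm (abelPoly η x _)]
    _ = ∑ b ∈ S, ∑ A ∈ (S.erase b).powerset,
          η b * (abelPoly η x A * (y + ∑ i ∈ S \ A, η i) ^ (#(S \ A) - 1)) := by
      refine sum_comm' fun A b => ?_
      simp only [mem_powerset, mem_sdiff, subset_erase]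
      tauto
    _ = ∑ b ∈ S, η b * (x + y + ∑ i ∈ S, η i) ^ (#S - 1) := by
      refine sum_congr rfl fun b hb => ?_
      have hF := hS b hb x (y + η b)
      rw [← add_assoc, add_assoc (x + y), add_sum_erase _ _ hb, card_erase_of_mem hb] at hF
      rw [← mul_sum, ← hF]
      refine congrArg _ (sum_congr rfl fun A hA => ?_)
      have hbA : b ∈ S \ A := mem_sdiff.2 ⟨hb, fun h => notMem_erase b S (mem_powerset.1 hA h)⟩
      rw [erase_sdiff_comm, add_assoc, add_sum_erase _ _ hbA, card_erase_of_mem hbA]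
    _ = _ := (sum_mul ..).symm
  simp_rw [pow_card_eq_abelPoly_add η y, mul_add]
  rw [sum_add_distrib, hconv, hdefect, ← add_mul, ← pow_succ',
    Nat.sub_add_cancel (card_pos.2 ⟨a, ha⟩)]

theorem abelIdentity (S : Finset ι) : AbelIdentity η S := by
  induction S using Finset.strongInduction with
  | H S ih => exact abelIdentity_of_forall_erase η fun b hb => ih _ (erase_ssubset hb)

theorem sum_powerset_abelPoly_mul_abelPoly (S : Finset ι) (u v : R) :
    ∑ A ∈ S.powerset, abelPoly η u A * abelPoly η v (S \ A) = abelPoly η (u + v) S := by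
  rcases S.eq_empty_or_nonempty with rfl | ⟨a, ha⟩
  · simp
  have := sum_powerset_insert_abelPoly_mul_abelPoly η (notMem_erase a S) (abelIdentity η _) u v
  rwa [insert_erase ha] at this

end Abel

lemma abelPoly_convolution_univ {α R : Type*} [Fintype α] [DecidableEq α] [Nonempty α]
    [CommSemiring R] (η : α → R) (u v : R) :
    u * v * ∑ F ∈ univ.filter (fun F : Finset α => 1 ≤ #F ∧ #F < Fintype.card α),
        (u + ∑ i ∈ F, η i) ^ (#F - 1) * (v + ∑ i ∈ Fᶜ, η i) ^ (#Fᶜ - 1) +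
      u * (u + ∑ i, η i) ^ (Fintype.card α - 1) + v * (v + ∑ i, η i) ^ (Fintype.card α - 1) =
      (u + v) * (u + v + ∑ i, η i) ^ (Fintype.card α - 1) := by
  have proper : univ.filter (fun F : Finset α => 1 ≤ #F ∧ #F < Fintype.card α) =
      (univ.erase ∅).erase univ := by
    ext F
    simp [Nat.one_le_iff_ne_zero, card_lt_iff_ne_univ, and_comm]
  have hne : (∅ : Finset α) ≠ univ := univ_nonempty.ne_empty.symm
  have middle : ∀ F ∈ (univ.erase ∅).erase univ, abelPoly η u F * abelPoly η v (univ \ F) =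
      u * v * ((u + ∑ i ∈ F, η i) ^ (#F - 1) * (v + ∑ i ∈ Fᶜ, η i) ^ (#Fᶜ - 1)) := by
    intro F hF
    obtain ⟨hFu, hF0, -⟩ := by simpa only [mem_erase] using hF
    rw [← compl_eq_univ_sdiff, abelPoly_of_nonempty η u (nonempty_iff_ne_empty.2 hF0),
      abelPoly_of_nonempty η v (nonempty_iff_ne_empty.2 ((compl_eq_empty_iff F).not.2 hFu))]
    ring
  have := sum_powerset_abelPoly_mul_abelPoly η univ u v
  rw [powerset_univ, ← add_sum_erase _ _ (mem_univ ∅),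
    ← add_sum_erase _ _ (mem_erase.2 ⟨hne.symm, mem_univ _⟩), sum_congr rfl middle, ← mul_sum,
    abelPoly_of_nonempty η _ univ_nonempty] at this
  simp only [abelPoly_empty, sdiff_empty, Finset.sdiff_self, card_univ,
    abelPoly_of_nonempty η _ univ_nonempty] at this
  rw [proper, ← this]
  ring

lemma eq_of_forall_mul_eq_of_hasDerivAt {Q g : ℝ → ℝ} {c : ℝ} (hQ : DifferentiableAt ℝ Q 0)
    (hg : HasDerivAt g c 0) (h : ∀ t, t * Q t = g t) : Q 0 = c := by
  have hQg : HasDerivAt g (Q 0) 0 := by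
    have := (hasDerivAt_id' (0 : ℝ)).fun_mul hQ.hasDerivAt
    rw [← funext h]
    simpa using this
  exact hQg.unique hg

theorem stmt13_general (L : ℕ) (η : Fin (L + 2) → ℝ) :
    (L + 1 : ℝ) * (∑ i, η i) ^ L
      = (1 / 2) * ∑ F ∈ Finset.univ.filter
          (fun F : Finset (Fin (L + 2)) => 1 ≤ F.card ∧ F.card ≤ L + 1),
          (∑ i ∈ F, η i) ^ (F.card - 1) * (∑ i ∈ Fᶜ, η i) ^ (Fᶜ.card - 1) := by
  set Q : ℝ → ℝ := fun t => ∑ F ∈ Finset.univ.filter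
          (fun F : Finset (Fin (L + 2)) => 1 ≤ F.card ∧ F.card ≤ L + 1),
          (t + ∑ i ∈ F, η i) ^ (F.card - 1) * (t + ∑ i ∈ Fᶜ, η i) ^ (Fᶜ.card - 1)
  have hQ : ∀ t, t * Q t = 2 * (2 * t + ∑ i, η i) ^ (L + 1) - 2 * (t + ∑ i, η i) ^ (L + 1) := by
    intro t
    have split := abelPoly_convolution_univ η t t
    rw [Fintype.card_fin, show L + 2 - 1 = L + 1 from rfl,
      filter_congr fun F _ => and_congr_right_iff.2 fun _ => Nat.lt_succ_iff] at split
    rcases eq_or_ne t 0 with rfl | ht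
    · simp
    refine mul_left_cancel₀ ht ?_
    linear_combination split
  have hg : HasDerivAt
      (fun t : ℝ => 2 * (2 * t + ∑ i, η i) ^ (L + 1) - 2 * (t + ∑ i, η i) ^ (L + 1))
      (2 * (L + 1) * (∑ i, η i) ^ L) 0 := by
    have h2 := ((((hasDerivAt_id' (0 : ℝ)).const_mul 2).add_const (∑ i, η i)).fun_pow
      (L + 1)).const_mul 2
    have h1 := ((((hasDerivAt_id' (0 : ℝ)).add_const (∑ i, η i)).fun_pow (L + 1)).const_mul 2)
    refine (h2.sub h1).congr_deriv ?_
    push_cast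
    ring
  have hQ0 := eq_of_forall_mul_eq_of_hasDerivAt (by fun_prop) hg hQ
  simp only [Q, zero_add] at hQ0
  rw [hQ0]
  ring

theorem stmt13 (L : ℕ) (hL : 1 ≤ L) (η : Fin (L + 2) → ℝ) :
    (L + 1 : ℝ) * (∑ i, η i) ^ L
      = (1 / 2) * ∑ F ∈ Finset.univ.filter
          (fun F : Finset (Fin (L + 2)) => 1 ≤ F.card ∧ F.card ≤ L + 1),
          (∑ i ∈ F, η i) ^ (F.card - 1) * (∑ i ∈ Fᶜ, η i) ^ (Fᶜ.card - 1) :=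
  stmt13_general L η
end

section
/- Let χ : ℝ → ℝ be a smooth (C^∞) function. Then for every integer L ≥ 1: (L+1) · d^L/dy^L [χ''(y) χ(y)^{L+1}] = Σ_{ℓ=0}^{L} binom(L+1, ℓ) · d^ℓ/dy^ℓ [χ''(y) χ(y)^ℓ] · d^{L−ℓ}/dy^{L−ℓ} [χ(y)^{L+1−ℓ}]. -/
open Finset
open scoped ContDiff

namespace Stmt14Aux

noncomputable def T (χ : ℝ → ℝ) (n : ℕ) (φ : ℝ → ℝ) : ℝ → ℝ :=
  iteratedDeriv n fun z => φ z * χ z ^ n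

noncomputable def P (χ ψ : ℝ → ℝ) : ℕ → ℝ → ℝ
  | 0 => ψ
  | j + 1 => T χ j fun z => deriv ψ z * χ z

abbrev Sm (f : ℝ → ℝ) : Prop := ContDiff ℝ ∞ f

lemma Sm.dif {f : ℝ → ℝ} (h : Sm f) : Differentiable ℝ f :=
  h.differentiable (by simp)

lemma Sm.drv {f : ℝ → ℝ} (h : Sm f) : Sm (deriv f) := (contDiff_infty_iff_deriv.mp h).2

lemma Sm.itd {f : ℝ → ℝ} (h : Sm f) (n : ℕ) : Sm (iteratedDeriv n f) := by
  rw [iteratedDeriv_eq_iterate]; exact h.iterate_deriv n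

lemma Sm.fin {f : ℝ → ℝ} (h : Sm f) (n : ℕ) : ContDiff ℝ n f :=
  h.of_le (by exact_mod_cast le_top)

lemma smT {χ φ : ℝ → ℝ} (hχ : Sm χ) (hφ : Sm φ) (n : ℕ) : Sm (T χ n φ) :=
  Sm.itd (hφ.mul (hχ.pow n)) n

lemma smP {χ ψ : ℝ → ℝ} (hχ : Sm χ) (hψ : Sm ψ) (j : ℕ) : Sm (P χ ψ j) := by
  cases j with
  | zero => exact hψ
  | succ j => exact smT hχ (hψ.drv.mul hχ) j

lemma T_zero (χ φ : ℝ → ℝ) : T χ 0 φ = φ := by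
  funext y; simp [T]

lemma iteratedDeriv_add' {f g : ℝ → ℝ} {n : ℕ} (hf : Sm f) (hg : Sm g) :
    iteratedDeriv n (fun z => f z + g z) = fun y => iteratedDeriv n f y + iteratedDeriv n g y := by
  funext y
  rw [← iteratedDerivWithin_univ, ← iteratedDerivWithin_univ, ← iteratedDerivWithin_univ]
  exact iteratedDerivWithin_add (Set.mem_univ y) uniqueDiffOn_univ
    (hf.fin n).contDiffWithinAt (hg.fin n).contDiffWithinAt

lemma iteratedDeriv_cmul {f : ℝ → ℝ} {n : ℕ} (hf : Sm f) (c : ℝ) :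
    iteratedDeriv n (fun z => c * f z) = fun y => c * iteratedDeriv n f y := by
  funext y
  rw [← iteratedDerivWithin_univ, ← iteratedDerivWithin_univ]
  exact iteratedDerivWithin_const_mul (Set.mem_univ y) uniqueDiffOn_univ c (hf.fin n).contDiffWithinAt

lemma T_add {χ f g : ℝ → ℝ} {n : ℕ} (hχ : Sm χ) (hf : Sm f) (hg : Sm g) :
    T χ n (fun z => f z + g z) = fun y => T χ n f y + T χ n g y := by
  unfold T
  have h : (fun z => (f z + g z) * χ z ^ n)
      = fun z => f z * χ z ^ n + g z * χ z ^ n := by funext z; ring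
  rw [h, iteratedDeriv_add' (hf.mul (hχ.pow n)) (hg.mul (hχ.pow n))]

lemma T_cmul {χ f : ℝ → ℝ} {n : ℕ} (hχ : Sm χ) (hf : Sm f) (c : ℝ) :
    T χ n (fun z => c * f z) = fun y => c * T χ n f y := by
  unfold T
  have h : (fun z => (c * f z) * χ z ^ n) = fun z => c * (f z * χ z ^ n) := by funext z; ring
  rw [h, iteratedDeriv_cmul (hf.mul (hχ.pow n))]

lemma T_succ {χ φ : ℝ → ℝ} {n : ℕ} (hχ : Sm χ) (hφ : Sm φ) :
    T χ (n + 1) φ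
      = T χ n (fun z => deriv φ z * χ z + ((n : ℝ) + 1) * (φ z * deriv χ z)) := by
  unfold T
  rw [iteratedDeriv_succ']
  have hd : (deriv fun z => φ z * χ z ^ (n + 1))
      = fun z => (deriv φ z * χ z + ((n : ℝ) + 1) * (φ z * deriv χ z)) * χ z ^ n := by
    funext z
    have hp := ((hχ.dif z).hasDerivAt).pow (n + 1)
    simp only [Nat.add_sub_cancel] at hp
    have h1 := ((hφ.dif z).hasDerivAt).mul hp
    rw [show (fun z => φ z * χ z ^ (n + 1)) = φ * χ ^ (n + 1) from rfl, h1.deriv, Pi.pow_apply]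
    push_cast
    ring
  rw [hd]

lemma T_succ_eval {χ φ : ℝ → ℝ} {n : ℕ} (hχ : Sm χ) (hφ : Sm φ) :
    T χ (n + 1) φ = fun y =>
      T χ n (fun z => deriv φ z * χ z) y
        + ((n : ℝ) + 1) * T χ n (fun z => φ z * deriv χ z) y := by
  rw [T_succ hχ hφ,
    T_add hχ (hφ.drv.mul hχ) (contDiff_const.mul (hφ.mul hχ.drv)),
    T_cmul hχ (hφ.mul hχ.drv)]

lemma P_succ {χ ψ : ℝ → ℝ} (hχ : Sm χ) (hψ : Sm ψ) (j : ℕ) :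
    P χ ψ (j + 1) = fun y =>
      P χ (fun z => deriv ψ z * χ z) j y
        + (j : ℝ) * T χ (j - 1) (fun z => deriv ψ z * χ z * deriv χ z) y := by
  cases j with
  | zero => funext y; simp [P, T_zero]
  | succ j =>
      show T χ (j + 1) (fun z => deriv ψ z * χ z) = _
      rw [T_succ_eval hχ (hψ.drv.mul hχ)]
      funext y
      have h : (fun z => (deriv ψ z * χ z) * deriv χ z)
          = fun z => deriv ψ z * χ z * deriv χ z := by funext z; ring
      rw [h]
      show _ = P χ (fun z => deriv ψ z * χ z) (j + 1) y + _
      simp only [P, Nat.add_sub_cancel]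
      push_cast
      ring


lemma trinom {m k i : ℕ} (hk : k + i ≤ m) :
    m.choose k * (m - k).choose i = m.choose i * (m - i).choose k := by
  have h1 := Nat.choose_mul (n := m) (Nat.le_add_right k i)
  have h2 := Nat.choose_mul (n := m) (Nat.le_add_left i k)
  simp only [Nat.add_sub_cancel_left, Nat.add_sub_cancel] at h1 h2
  have h3 : (k + i).choose k = (k + i).choose i := by
    have := Nat.choose_symm (Nat.le_add_right k i)
    simpa [Nat.add_sub_cancel_left] using this.symm
  rw [← h1, ← h2, h3]

lemma absorb (n k : ℕ) : (n + 1).choose k * (n + 1 - k) = (n + 1) * n.choose k := by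
  rw [← Nat.choose_mul_succ_eq n k, Nat.mul_comm]

lemma pascal_sum (n : ℕ) (F : ℕ → ℝ) :
    ∑ k ∈ range (n + 2), ((n + 1).choose k : ℝ) * F k
      = (∑ k ∈ range (n + 1), (n.choose k : ℝ) * F (k + 1))
        + ∑ k ∈ range (n + 1), (n.choose k : ℝ) * F k := by
  have h0 : ∑ k ∈ range (n + 2), ((n : ℕ).choose k : ℝ) * F k
      = (∑ k ∈ range (n + 1), ((n : ℕ).choose (k + 1) : ℝ) * F (k + 1))
          + ((n : ℕ).choose 0 : ℝ) * F 0 := Finset.sum_range_succ' _ (n + 1)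
  have h1 : ∑ k ∈ range (n + 2), ((n : ℕ).choose k : ℝ) * F k
      = ∑ k ∈ range (n + 1), ((n : ℕ).choose k : ℝ) * F k := by
    rw [Finset.sum_range_succ, Nat.choose_eq_zero_of_lt (Nat.lt_succ_self n)]
    simp
  rw [Finset.sum_range_succ' (fun k => (((n + 1).choose k : ℕ) : ℝ) * F k) (n + 1)]
  have h2 : ∀ k ∈ range (n + 1), (((n + 1).choose (k + 1) : ℕ) : ℝ) * F (k + 1)
      = ((n.choose k : ℕ) : ℝ) * F (k + 1) + ((n.choose (k + 1) : ℕ) : ℝ) * F (k + 1) := by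
    intro k _
    rw [Nat.choose_succ_succ']
    push_cast
    ring
  rw [Finset.sum_congr rfl h2, Finset.sum_add_distrib]
  have h3 : (∑ k ∈ range (n + 1), ((n.choose (k + 1) : ℕ) : ℝ) * F (k + 1))
      + (((n + 1).choose 0 : ℕ) : ℝ) * F 0
      = ∑ k ∈ range (n + 1), ((n.choose k : ℕ) : ℝ) * F k := by
    rw [Nat.choose_zero_right]
    rw [← h1, h0, Nat.choose_zero_right]
  rw [add_assoc, h3]

def Mstat (χ : ℝ → ℝ) (n : ℕ) : Prop :=
  ∀ φ ψ : ℝ → ℝ, Sm φ → Sm ψ →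
    T χ n (fun z => φ z * ψ z)
      = fun y => ∑ k ∈ Finset.range (n + 1),
          (n.choose k : ℝ) * T χ k φ y * P χ ψ (n - k) y

lemma Qlem (χ : ℝ → ℝ) (hχ : Sm χ) (m : ℕ) (hM : ∀ j, j ≤ m → Mstat χ j)
    (f g : ℝ → ℝ) (hf : Sm f) (hg : Sm g) (y : ℝ) :
    ∑ k ∈ range (m + 1), (m.choose k : ℝ) * T χ k f y * T χ (m - k) g y
      = ∑ k ∈ range (m + 1), (m.choose k : ℝ) * T χ k (fun z => f z * g z) y
          * T χ (m - k) (fun _ => (1 : ℝ)) y := by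
  have hone : Sm (fun _ : ℝ => (1 : ℝ)) := contDiff_const
  have hstep1 : ∀ k ∈ range (m + 1),
      (m.choose k : ℝ) * T χ k f y * T χ (m - k) g y
        = ∑ i ∈ range (m - k + 1),
            ((m.choose k * (m - k).choose i : ℕ) : ℝ)
              * (T χ i (fun _ => (1 : ℝ)) y * (T χ k f y * P χ g (m - k - i) y)) := by
    intro k _
    have hg' : T χ (m - k) g = T χ (m - k) (fun z => (fun _ : ℝ => (1 : ℝ)) z * g z) := by
      simp only [one_mul]
    rw [hg', hM (m - k) (Nat.sub_le m k) (fun _ => 1) g hone hg, Finset.mul_sum]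
    refine Finset.sum_congr rfl fun i _ => ?_
    push_cast
    ring
  rw [Finset.sum_congr rfl hstep1]
  rw [Finset.sum_comm' (t' := range (m + 1)) (s' := fun i => range (m - i + 1))
    (fun k i => by simp only [mem_range, Nat.lt_succ_iff]; omega)]
  have hstep2 : ∀ i ∈ range (m + 1),
      (∑ k ∈ range (m - i + 1),
          ((m.choose k * (m - k).choose i : ℕ) : ℝ)
            * (T χ i (fun _ => (1 : ℝ)) y * (T χ k f y * P χ g (m - k - i) y)))
        = (m.choose i : ℝ) * T χ i (fun _ => (1 : ℝ)) y
            * T χ (m - i) (fun z => f z * g z) y := by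
    intro i hi
    have hi' : i ≤ m := Nat.lt_succ_iff.mp (mem_range.mp hi)
    rw [hM (m - i) (Nat.sub_le m i) f g hf hg, Finset.mul_sum]
    refine Finset.sum_congr rfl fun k hk => ?_
    have hk' : k ≤ m - i := Nat.lt_succ_iff.mp (mem_range.mp hk)
    have hki : k + i ≤ m := by omega
    have e1 : m - k - i = m - i - k := by omega
    rw [e1, trinom hki]
    push_cast
    ring
  rw [Finset.sum_congr rfl hstep2]
  rw [← Finset.sum_range_reflect
    (fun k => (m.choose k : ℝ) * T χ k (fun z => f z * g z) y
      * T χ (m - k) (fun _ => (1 : ℝ)) y) (m + 1)]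
  refine Finset.sum_congr rfl fun i hi => ?_
  have hi' : i ≤ m := Nat.lt_succ_iff.mp (mem_range.mp hi)
  have e1 : m + 1 - 1 - i = m - i := by omega
  have e2 : m - (m - i) = i := by omega
  rw [e1, Nat.choose_symm hi', e2]
  ring

lemma Rlem (χ : ℝ → ℝ) (hχ : Sm χ) (n : ℕ) (hM : ∀ j, j ≤ n → Mstat χ j)
    (φ ψ : ℝ → ℝ) (hφ : Sm φ) (hψ : Sm ψ) (y : ℝ) :
    ∑ k ∈ range (n + 1), ((n.choose k * (n - k) : ℕ) : ℝ)
        * T χ k (fun z => φ z * deriv χ z) y * P χ ψ (n - k) y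
      = ∑ k ∈ range (n + 1), ((n.choose k * (n - k) : ℕ) : ℝ)
          * T χ k φ y * T χ (n - k - 1) (fun z => deriv ψ z * χ z * deriv χ z) y := by
  cases n with
  | zero => simp
  | succ m =>
    have hM' : ∀ j, j ≤ m → Mstat χ j := fun j hj => hM j (Nat.le_succ_of_le hj)
    have hL : ∑ k ∈ range (m + 2), (((m + 1).choose k * (m + 1 - k) : ℕ) : ℝ)
          * T χ k (fun z => φ z * deriv χ z) y * P χ ψ (m + 1 - k) y
        = ((m : ℝ) + 1) * ∑ k ∈ range (m + 1), (m.choose k : ℝ)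
            * T χ k (fun z => φ z * deriv χ z) y
            * T χ (m - k) (fun z => deriv ψ z * χ z) y := by
      rw [Finset.sum_range_succ]
      simp only [Nat.sub_self, Nat.mul_zero, Nat.cast_zero, zero_mul, mul_zero, add_zero]
      rw [Finset.mul_sum]
      refine Finset.sum_congr rfl fun k hk => ?_
      have hk' : k ≤ m := Nat.lt_succ_iff.mp (mem_range.mp hk)
      have e1 : m + 1 - k = (m - k) + 1 := by omega
      have e2 : P χ ψ ((m - k) + 1) = T χ (m - k) (fun z => deriv ψ z * χ z) := rfl
      rw [absorb m k, e1, e2]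
      push_cast
      ring
    have hR : ∑ k ∈ range (m + 2), (((m + 1).choose k * (m + 1 - k) : ℕ) : ℝ)
          * T χ k φ y * T χ (m + 1 - k - 1) (fun z => deriv ψ z * χ z * deriv χ z) y
        = ((m : ℝ) + 1) * ∑ k ∈ range (m + 1), (m.choose k : ℝ)
            * T χ k φ y * T χ (m - k) (fun z => deriv ψ z * χ z * deriv χ z) y := by
      rw [Finset.sum_range_succ]
      simp only [Nat.sub_self, Nat.mul_zero, Nat.cast_zero, zero_mul, mul_zero, add_zero]
      rw [Finset.mul_sum]
      refine Finset.sum_congr rfl fun k hk => ?_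
      have hk' : k ≤ m := Nat.lt_succ_iff.mp (mem_range.mp hk)
      have e1 : m + 1 - k - 1 = m - k := by omega
      rw [absorb m k, e1]
      push_cast
      ring
    rw [hL, hR]
    congr 1
    rw [Qlem χ hχ m hM' (fun z => φ z * deriv χ z) (fun z => deriv ψ z * χ z)
        (hφ.mul hχ.drv) (hψ.drv.mul hχ) y,
      Qlem χ hχ m hM' φ (fun z => deriv ψ z * χ z * deriv χ z)
        hφ ((hψ.drv.mul hχ).mul hχ.drv) y]
    have e : (fun z => (φ z * deriv χ z) * (deriv ψ z * χ z))
        = fun z => φ z * (deriv ψ z * χ z * deriv χ z) := by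
      funext z
      ring
    rw [e]

theorem Mthm (χ : ℝ → ℝ) (hχ : Sm χ) : ∀ n : ℕ, Mstat χ n := by
  intro n
  induction n using Nat.strong_induction_on with
  | _ n IH =>
    cases n with
    | zero =>
      intro φ ψ hφ hψ
      funext y
      rw [T_zero]
      simp [T_zero, P]
    | succ n =>
      intro φ ψ hφ hψ
      have hM : ∀ j, j ≤ n → Mstat χ j := fun j hj => IH j (Nat.lt_succ_of_le hj)
      have hχ' := hχ.drv
      have hφ' := hφ.drv
      have hψ' := hψ.drv
      funext y
      -- Step 1: expand T (n+1) (φψ) into three T n terms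
      have h2 : (fun z => deriv (fun w => φ w * ψ w) z * χ z)
          = fun z => (deriv φ z * χ z) * ψ z + φ z * (deriv ψ z * χ z) := by
        funext z
        rw [deriv_fun_mul (hφ.dif z) (hψ.dif z)]
        ring
      have h3 : (fun z => (φ z * ψ z) * deriv χ z)
          = fun z => (φ z * deriv χ z) * ψ z := by
        funext z
        ring
      have hA : T χ (n + 1) (fun z => φ z * ψ z) y
          = T χ n (fun z => (deriv φ z * χ z) * ψ z) y
            + T χ n (fun z => φ z * (deriv ψ z * χ z)) y
            + ((n : ℝ) + 1) * T χ n (fun z => (φ z * deriv χ z) * ψ z) y := by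
        rw [T_succ_eval hχ (hφ.mul hψ)]
        simp only []
        rw [h2, h3,
          T_add hχ ((hφ'.mul hχ).mul hψ) (hφ.mul (hψ'.mul hχ))]
      rw [hA]
      -- Step 2: apply IH to the three terms
      have hIH1 := congrFun (hM n le_rfl (fun z => deriv φ z * χ z) ψ (hφ'.mul hχ) hψ) y
      have hIH2 := congrFun (hM n le_rfl φ (fun z => deriv ψ z * χ z) hφ (hψ'.mul hχ)) y
      have hIH3 := congrFun (hM n le_rfl (fun z => φ z * deriv χ z) ψ (hφ.mul hχ') hψ) y
      rw [hIH1, hIH2, hIH3]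
      -- Step 3: split the third sum's coefficient (n+1) = (k+1) + (n-k)
      rw [Finset.mul_sum]
      have hsplit : ∀ k ∈ range (n + 1),
          ((n : ℝ) + 1) * ((n.choose k : ℝ) * T χ k (fun z => φ z * deriv χ z) y
              * P χ ψ (n - k) y)
            = ((k : ℝ) + 1) * ((n.choose k : ℝ)
                * T χ k (fun z => φ z * deriv χ z) y * P χ ψ (n - k) y)
              + ((n.choose k * (n - k) : ℕ) : ℝ)
                * T χ k (fun z => φ z * deriv χ z) y * P χ ψ (n - k) y := by
        intro k hk
        have hk' : k ≤ n := Nat.lt_succ_iff.mp (mem_range.mp hk)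
        push_cast [Nat.cast_sub hk']
        ring
      rw [Finset.sum_congr rfl hsplit, Finset.sum_add_distrib]
      -- Step 4: use Rlem on the remainder
      rw [Rlem χ hχ n hM φ ψ hφ hψ y]
      -- Step 5: combine first sum with the (k+1)-part to get T (k+1) φ
      have hcomb1 : (∑ k ∈ range (n + 1), (n.choose k : ℝ)
            * T χ k (fun z => deriv φ z * χ z) y * P χ ψ (n - k) y)
          + (∑ k ∈ range (n + 1), ((k : ℝ) + 1) * ((n.choose k : ℝ)
              * T χ k (fun z => φ z * deriv χ z) y * P χ ψ (n - k) y))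
          = ∑ k ∈ range (n + 1), (n.choose k : ℝ) * T χ (k + 1) φ y * P χ ψ (n - k) y := by
        rw [← Finset.sum_add_distrib]
        refine Finset.sum_congr rfl fun k _ => ?_
        have := congrFun (T_succ_eval (n := k) hχ hφ) y
        rw [this]
        ring
      -- Step 6: combine second sum with remainder to get P ψ (n+1-k)
      have hcomb2 : (∑ k ∈ range (n + 1), (n.choose k : ℝ) * T χ k φ y
              * P χ (fun z => deriv ψ z * χ z) (n - k) y)
          + (∑ k ∈ range (n + 1), ((n.choose k * (n - k) : ℕ) : ℝ)
              * T χ k φ y * T χ (n - k - 1) (fun z => deriv ψ z * χ z * deriv χ z) y)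
          = ∑ k ∈ range (n + 1), (n.choose k : ℝ) * T χ k φ y * P χ ψ (n + 1 - k) y := by
        rw [← Finset.sum_add_distrib]
        refine Finset.sum_congr rfl fun k hk => ?_
        have hk' : k ≤ n := Nat.lt_succ_iff.mp (mem_range.mp hk)
        have e1 : n + 1 - k = (n - k) + 1 := by omega
        rw [e1, congrFun (P_succ hχ hψ (n - k)) y]
        push_cast
        ring
      -- Step 7: Pascal recombination
      have hpascal := pascal_sum n (fun k => T χ k φ y * P χ ψ (n + 1 - k) y)
      have hgoal : ∑ k ∈ range (n + 1 + 1), ((n + 1).choose k : ℝ) * T χ k φ y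
            * P χ ψ (n + 1 - k) y
          = (∑ k ∈ range (n + 1), (n.choose k : ℝ) * (T χ (k + 1) φ y
              * P χ ψ (n + 1 - (k + 1)) y))
            + ∑ k ∈ range (n + 1), (n.choose k : ℝ) * (T χ k φ y * P χ ψ (n + 1 - k) y) := by
        rw [← hpascal]
        refine Finset.sum_congr rfl fun k _ => ?_
        ring
      rw [hgoal]
      have e2 : ∀ k, n + 1 - (k + 1) = n - k := fun k => by omega
      calc (∑ k ∈ range (n + 1), (n.choose k : ℝ)
              * T χ k (fun z => deriv φ z * χ z) y * P χ ψ (n - k) y)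
            + (∑ k ∈ range (n + 1), (n.choose k : ℝ) * T χ k φ y
                * P χ (fun z => deriv ψ z * χ z) (n - k) y)
            + ((∑ k ∈ range (n + 1), ((k : ℝ) + 1) * ((n.choose k : ℝ)
                * T χ k (fun z => φ z * deriv χ z) y * P χ ψ (n - k) y))
              + ∑ k ∈ range (n + 1), ((n.choose k * (n - k) : ℕ) : ℝ)
                * T χ k φ y * T χ (n - k - 1) (fun z => deriv ψ z * χ z * deriv χ z) y)
          = ((∑ k ∈ range (n + 1), (n.choose k : ℝ)
                * T χ k (fun z => deriv φ z * χ z) y * P χ ψ (n - k) y)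
              + ∑ k ∈ range (n + 1), ((k : ℝ) + 1) * ((n.choose k : ℝ)
                * T χ k (fun z => φ z * deriv χ z) y * P χ ψ (n - k) y))
            + ((∑ k ∈ range (n + 1), (n.choose k : ℝ) * T χ k φ y
                * P χ (fun z => deriv ψ z * χ z) (n - k) y)
              + ∑ k ∈ range (n + 1), ((n.choose k * (n - k) : ℕ) : ℝ)
                * T χ k φ y * T χ (n - k - 1) (fun z => deriv ψ z * χ z * deriv χ z) y) := by
            ring
        _ = (∑ k ∈ range (n + 1), (n.choose k : ℝ) * T χ (k + 1) φ y * P χ ψ (n - k) y)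
            + ∑ k ∈ range (n + 1), (n.choose k : ℝ) * T χ k φ y * P χ ψ (n + 1 - k) y := by
            rw [hcomb1, hcomb2]
        _ = (∑ k ∈ range (n + 1), (n.choose k : ℝ) * (T χ (k + 1) φ y
              * P χ ψ (n + 1 - (k + 1)) y))
            + ∑ k ∈ range (n + 1), (n.choose k : ℝ) * (T χ k φ y * P χ ψ (n + 1 - k) y) := by
            congr 1
            · refine Finset.sum_congr rfl fun k _ => ?_
              rw [e2 k]
              ring
            · refine Finset.sum_congr rfl fun k _ => ?_
              ring

lemma T_chi (χ : ℝ → ℝ) (hχ : Sm χ) (j : ℕ) :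
    T χ j χ = fun y => ((j : ℝ) + 1) * P χ χ j y := by
  cases j with
  | zero => funext y; simp [T_zero, P]
  | succ j =>
    rw [T_succ_eval hχ hχ]
    funext y
    have e : (fun z => χ z * deriv χ z) = fun z => deriv χ z * χ z := by
      funext z; ring
    rw [e]
    have hP : P χ χ (j + 1) y = T χ j (fun z => deriv χ z * χ z) y := rfl
    rw [hP]
    push_cast
    ring

end Stmt14Aux

theorem stmt14 (χ : ℝ → ℝ) (hχ : ContDiff ℝ (⊤ : ℕ∞) χ) (L : ℕ) (hL : 1 ≤ L) (y : ℝ) :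
    (L + 1 : ℝ) * iteratedDeriv L (fun z => deriv (deriv χ) z * χ z ^ (L + 1)) y
      = ∑ ℓ ∈ Finset.range (L + 1),
          (Nat.choose (L + 1) ℓ : ℝ)
            * iteratedDeriv ℓ (fun z => deriv (deriv χ) z * χ z ^ ℓ) y
            * iteratedDeriv (L - ℓ) (fun z => χ z ^ (L + 1 - ℓ)) y := by
  open Stmt14Aux in
  have hs : Sm χ := hχ.of_le (by simp)
  have hs2 : Stmt14Aux.Sm (fun z => deriv (deriv χ) z) := hs.drv.drv
  have eL : (fun z => deriv (deriv χ) z * χ z ^ (L + 1))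
      = fun z => (deriv (deriv χ) z * χ z) * χ z ^ L := by
    funext z; rw [pow_succ]; ring
  rw [eL]
  have hLHS : iteratedDeriv L (fun z => (deriv (deriv χ) z * χ z) * χ z ^ L) y
      = Stmt14Aux.T χ L (fun z => deriv (deriv χ) z * χ z) y := rfl
  rw [hLHS,
    congrFun (Stmt14Aux.Mthm χ hs L (fun z => deriv (deriv χ) z) χ hs2 hs) y,
    Finset.mul_sum]
  refine Finset.sum_congr rfl fun ℓ hℓ => ?_
  have hℓ' : ℓ ≤ L := Nat.lt_succ_iff.mp (Finset.mem_range.mp hℓ)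
  have e1 : L + 1 - ℓ = (L - ℓ) + 1 := by omega
  have e2 : (fun z => χ z ^ ((L - ℓ) + 1)) = fun z => χ z * χ z ^ (L - ℓ) := by
    funext z; rw [pow_succ]; ring
  have e3 : iteratedDeriv ℓ (fun z => deriv (deriv χ) z * χ z ^ ℓ) y
      = Stmt14Aux.T χ ℓ (fun z => deriv (deriv χ) z) y := rfl
  have e4 : iteratedDeriv (L - ℓ) (fun z => χ z * χ z ^ (L - ℓ)) y
      = Stmt14Aux.T χ (L - ℓ) χ y := rfl
  rw [e1, e2, e3, e4, congrFun (Stmt14Aux.T_chi χ hs (L - ℓ)) y]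
  have e5 : ((L + 1).choose ℓ * (L + 1 - ℓ) : ℕ) = ((L + 1) * L.choose ℓ : ℕ) :=
    Stmt14Aux.absorb L ℓ
  have e6 : ((L + 1 - ℓ : ℕ) : ℝ) = ((L - ℓ : ℕ) : ℝ) + 1 := by
    rw [e1]; push_cast; ring
  have e7 : ((L : ℝ) + 1) * (L.choose ℓ : ℝ)
      = ((L + 1).choose ℓ : ℝ) * (((L - ℓ : ℕ) : ℝ) + 1) := by
    rw [← e6]
    exact_mod_cast congrArg (Nat.cast : ℕ → ℝ) e5.symm
  calc ((L : ℝ) + 1) * ((L.choose ℓ : ℝ) * Stmt14Aux.T χ ℓ (fun z => deriv (deriv χ) z) y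
          * Stmt14Aux.P χ χ (L - ℓ) y)
      = (((L : ℝ) + 1) * (L.choose ℓ : ℝ)) * (Stmt14Aux.T χ ℓ (fun z => deriv (deriv χ) z) y
          * Stmt14Aux.P χ χ (L - ℓ) y) := by ring
    _ = _ := by rw [e7]; ring
end

section
/- Let χ : ℝ → ℝ be a smooth (C^∞) function. Then for every integer L ≥ 1: d^L/dy^L [χ'(y) χ(y)^L] − χ'(y) · d^L/dy^L [χ(y)^L] = Σ_{ℓ=0}^{L−1} binom(L, ℓ) · d^ℓ/dy^ℓ [χ(y)^ℓ] · d^{L−1−ℓ}/dy^{L−1−ℓ} [χ''(y) χ(y)^{L−ℓ}]. -/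
open scoped ContDiff

private lemma sdiff {f : ℝ → ℝ} (hf : ContDiff ℝ ∞ f) : ContDiff ℝ ∞ (deriv f) :=
  (contDiff_infty_iff_deriv.mp hf).2

private lemma cdOn {f : ℝ → ℝ} (hf : ContDiff ℝ ∞ f) (n : ℕ) :
    ContDiffOn ℝ n f Set.univ :=
  (hf.of_le (by exact_mod_cast le_top)).contDiffOn

private lemma oneinf : (1 : WithTop ℕ∞) ≤ ∞ := by exact_mod_cast le_top

private lemma hda {f : ℝ → ℝ} (hf : ContDiff ℝ ∞ f) (z : ℝ) : HasDerivAt f (deriv f z) z :=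
  (hf.differentiable (by simp) z).hasDerivAt

private lemma itd_add2 {b c : ℝ → ℝ} (hb : ContDiff ℝ ∞ b) (hc : ContDiff ℝ ∞ c)
    (r : ℝ) (n : ℕ) (x : ℝ) :
    iteratedDeriv n (fun z => b z + r * c z) x
      = iteratedDeriv n b x + r * iteratedDeriv n c x := by
  have h1 := iteratedDerivWithin_add (Set.mem_univ x) uniqueDiffOn_univ
    (cdOn hb n x (Set.mem_univ x)) (cdOn ((contDiff_const (c := r)).mul hc) n x (Set.mem_univ x))
  have h2 := iteratedDerivWithin_const_mul (Set.mem_univ x) uniqueDiffOn_univ r (cdOn hc n x (Set.mem_univ x))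
  simp only [iteratedDerivWithin_univ] at h1 h2
  calc iteratedDeriv n (fun z => b z + r * c z) x
      = iteratedDeriv n (b + fun z => r * c z) x := by rfl
    _ = iteratedDeriv n b x + iteratedDeriv n (fun z => r * c z) x := h1
    _ = iteratedDeriv n b x + r * iteratedDeriv n c x := by rw [h2]

private lemma itd_add3 {a b c : ℝ → ℝ} (ha : ContDiff ℝ ∞ a) (hb : ContDiff ℝ ∞ b)
    (hc : ContDiff ℝ ∞ c) (r : ℝ) (n : ℕ) (x : ℝ) :
    iteratedDeriv n (fun z => a z + (b z + r * c z)) x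
      = iteratedDeriv n a x + (iteratedDeriv n b x + r * iteratedDeriv n c x) := by
  have h1 := iteratedDerivWithin_add (Set.mem_univ x) uniqueDiffOn_univ
    (cdOn ha n x (Set.mem_univ x)) (cdOn (hb.add ((contDiff_const (c := r)).mul hc)) n x (Set.mem_univ x))
  simp only [iteratedDerivWithin_univ] at h1
  calc iteratedDeriv n (fun z => a z + (b z + r * c z)) x
      = iteratedDeriv n (a + fun z => b z + r * c z) x := by rfl
    _ = iteratedDeriv n a x + iteratedDeriv n (fun z => b z + r * c z) x := h1
    _ = _ := by rw [itd_add2 hb hc r n x]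

private lemma deriv2 {v w : ℝ → ℝ} (hv : ContDiff ℝ ∞ v) (hw : ContDiff ℝ ∞ w) (m : ℕ) :
    deriv (fun z => v z * w z ^ (m+1))
      = fun z => (deriv v z * w z) * w z ^ m + ((m:ℝ)+1) * ((v z * deriv w z) * w z ^ m) := by
  funext z
  have H := ((hda hv z).mul ((hda hw z).pow (m+1))).deriv
  simp only [Nat.add_sub_cancel] at H
  rw [show (fun z => v z * w z ^ (m+1)) = v * w ^ (m+1) from rfl, H]; push_cast [Pi.pow_apply]; ring

private lemma deriv3 {u v w : ℝ → ℝ} (hu : ContDiff ℝ ∞ u) (hv : ContDiff ℝ ∞ v)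
    (hw : ContDiff ℝ ∞ w) (m : ℕ) :
    deriv (fun z => u z * v z * w z ^ (m+1))
      = fun z => v z * (deriv u z * w z) * w z ^ m
          + (u z * (deriv v z * w z) * w z ^ m
          + ((m:ℝ)+1) * (u z * (v z * deriv w z) * w z ^ m)) := by
  funext z
  have H := (((hda hu z).mul (hda hv z)).mul ((hda hw z).pow (m+1))).deriv
  simp only [Nat.add_sub_cancel] at H
  rw [show (fun z => u z * v z * w z ^ (m+1)) = u * v * w ^ (m+1) from rfl, H]; push_cast [Pi.pow_apply, Pi.mul_apply]; ring

private theorem keyS (χ : ℝ → ℝ) (hχ : ContDiff ℝ ∞ χ) :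
    ∀ (L : ℕ) (h g : ℝ → ℝ), ContDiff ℝ ∞ h → ContDiff ℝ ∞ g → ∀ y : ℝ,
      iteratedDeriv L (fun z => h z * g z * χ z ^ L) y
        = h y * iteratedDeriv L (fun z => g z * χ z ^ L) y
          + ∑ n ∈ Finset.range L, (L.choose (n+1) : ℝ)
              * iteratedDeriv n (fun z => deriv h z * χ z ^ (n+1)) y
              * iteratedDeriv (L - 1 - n) (fun z => g z * χ z ^ (L - 1 - n)) y := by
  intro L
  induction L with
  | zero =>
    intro h g hh hg y
    simp [iteratedDeriv_zero]
  | succ L IH =>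
    intro h g hh hg y
    have hh' := sdiff hh
    have hg' := sdiff hg
    have hχ' := sdiff hχ
    have hA : ContDiff ℝ ∞ (fun z => g z * (deriv h z * χ z) * χ z ^ L) :=
      (hg.mul (hh'.mul hχ)).mul (hχ.pow L)
    have hB : ContDiff ℝ ∞ (fun z => h z * (deriv g z * χ z) * χ z ^ L) :=
      (hh.mul (hg'.mul hχ)).mul (hχ.pow L)
    have hC : ContDiff ℝ ∞ (fun z => h z * (g z * deriv χ z) * χ z ^ L) :=
      (hh.mul (hg.mul hχ')).mul (hχ.pow L)
    have hD1 : ContDiff ℝ ∞ (fun z => (deriv g z * χ z) * χ z ^ L) :=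
      (hg'.mul hχ).mul (hχ.pow L)
    have hD2 : ContDiff ℝ ∞ (fun z => (g z * deriv χ z) * χ z ^ L) :=
      (hg.mul hχ').mul (hχ.pow L)
    -- instances of the induction hypothesis
    have I1 : iteratedDeriv L (fun z => g z * (deriv h z * χ z) * χ z ^ L) y
        = g y * iteratedDeriv L (fun z => (deriv h z * χ z) * χ z ^ L) y
          + ∑ n ∈ Finset.range L, (L.choose (n+1) : ℝ)
              * iteratedDeriv n (fun z => deriv g z * χ z ^ (n+1)) y
              * iteratedDeriv (L - 1 - n)
                  (fun z => (deriv h z * χ z) * χ z ^ (L - 1 - n)) y :=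
      IH g (fun z => deriv h z * χ z) hg (hh'.mul hχ) y
    have I2 : iteratedDeriv L (fun z => h z * (deriv g z * χ z) * χ z ^ L) y
        = h y * iteratedDeriv L (fun z => (deriv g z * χ z) * χ z ^ L) y
          + ∑ n ∈ Finset.range L, (L.choose (n+1) : ℝ)
              * iteratedDeriv n (fun z => deriv h z * χ z ^ (n+1)) y
              * iteratedDeriv (L - 1 - n)
                  (fun z => (deriv g z * χ z) * χ z ^ (L - 1 - n)) y :=
      IH h (fun z => deriv g z * χ z) hh (hg'.mul hχ) y
    have I3 : iteratedDeriv L (fun z => h z * (g z * deriv χ z) * χ z ^ L) y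
        = h y * iteratedDeriv L (fun z => (g z * deriv χ z) * χ z ^ L) y
          + ∑ n ∈ Finset.range L, (L.choose (n+1) : ℝ)
              * iteratedDeriv n (fun z => deriv h z * χ z ^ (n+1)) y
              * iteratedDeriv (L - 1 - n)
                  (fun z => (g z * deriv χ z) * χ z ^ (L - 1 - n)) y :=
      IH h (fun z => g z * deriv χ z) hh (hg.mul hχ') y
    -- reflect the first sum
    have E2 : (∑ n ∈ Finset.range L, (L.choose (n+1) : ℝ)
              * iteratedDeriv n (fun z => deriv g z * χ z ^ (n+1)) y
              * iteratedDeriv (L - 1 - n)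
                  (fun z => (deriv h z * χ z) * χ z ^ (L - 1 - n)) y)
        = ∑ n ∈ Finset.range L, (L.choose n : ℝ)
              * (iteratedDeriv n (fun z => deriv h z * χ z ^ (n+1)) y
              * iteratedDeriv (L - 1 - n)
                  (fun z => (deriv g z * χ z) * χ z ^ (L - 1 - n)) y) := by
      conv_rhs => rw [← Finset.sum_range_reflect]
      refine Finset.sum_congr rfl fun n hn => ?_
      have hn' := Finset.mem_range.mp hn
      have e1 : L - 1 - (L - 1 - n) = n := by omega
      have ch : L.choose (L - 1 - n) = L.choose (n+1) := by
        rw [show L - 1 - n = L - (n+1) from by omega, Nat.choose_symm (by omega : n+1 ≤ L)]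
      rw [e1, ch]
      rw [show (fun z => deriv g z * χ z ^ (n+1)) = (fun z => (deriv g z * χ z) * χ z ^ n)
          from funext fun z => by ring]
      rw [show (fun z => deriv h z * χ z ^ ((L - 1 - n)+1))
          = (fun z => (deriv h z * χ z) * χ z ^ (L - 1 - n)) from funext fun z => by ring]
      ring
    -- split the big sum on the right-hand side
    have Esplit : (∑ n ∈ Finset.range (L+1), ((L+1).choose (n+1) : ℝ)
              * iteratedDeriv n (fun z => deriv h z * χ z ^ (n+1)) y
              * iteratedDeriv (L - n) (fun z => g z * χ z ^ (L - n)) y)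
        = g y * iteratedDeriv L (fun z => (deriv h z * χ z) * χ z ^ L) y
          + ∑ n ∈ Finset.range L, ((L+1).choose (n+1) : ℝ)
              * iteratedDeriv n (fun z => deriv h z * χ z ^ (n+1)) y
              * (iteratedDeriv (L - 1 - n)
                    (fun z => (deriv g z * χ z) * χ z ^ (L - 1 - n)) y
                 + (((L - 1 - n : ℕ) : ℝ) + 1) * iteratedDeriv (L - 1 - n)
                    (fun z => (g z * deriv χ z) * χ z ^ (L - 1 - n)) y) := by
      rw [Finset.sum_range_succ]
      have hterm : ((L+1).choose (L+1) : ℝ)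
            * iteratedDeriv L (fun z => deriv h z * χ z ^ (L+1)) y
            * iteratedDeriv (L - L) (fun z => g z * χ z ^ (L - L)) y
          = g y * iteratedDeriv L (fun z => (deriv h z * χ z) * χ z ^ L) y := by
        rw [show (fun z => deriv h z * χ z ^ (L+1))
            = (fun z => (deriv h z * χ z) * χ z ^ L) from funext fun z => by ring]
        simp only [Nat.sub_self, Nat.choose_self, Nat.cast_one, one_mul,
          iteratedDeriv_zero, pow_zero, mul_one]
        ring
      rw [hterm, add_comm]
      congr 1
      refine Finset.sum_congr rfl fun n hn => ?_
      have hn' := Finset.mem_range.mp hn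
      have hs : L - n = (L - 1 - n) + 1 := by omega
      rw [hs, iteratedDeriv_succ', deriv2 hg hχ (L - 1 - n),
        itd_add2 ((hg'.mul hχ).mul (hχ.pow (L - 1 - n)))
          ((hg.mul hχ').mul (hχ.pow (L - 1 - n))) (((L - 1 - n : ℕ) : ℝ) + 1) (L - 1 - n) y]
    -- the combinatorial core
    have Efinal : (∑ n ∈ Finset.range L, (L.choose n : ℝ)
              * (iteratedDeriv n (fun z => deriv h z * χ z ^ (n+1)) y
              * iteratedDeriv (L - 1 - n)
                  (fun z => (deriv g z * χ z) * χ z ^ (L - 1 - n)) y))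
          + ((∑ n ∈ Finset.range L, (L.choose (n+1) : ℝ)
              * iteratedDeriv n (fun z => deriv h z * χ z ^ (n+1)) y
              * iteratedDeriv (L - 1 - n)
                  (fun z => (deriv g z * χ z) * χ z ^ (L - 1 - n)) y)
            + ((L:ℝ)+1) * (∑ n ∈ Finset.range L, (L.choose (n+1) : ℝ)
              * iteratedDeriv n (fun z => deriv h z * χ z ^ (n+1)) y
              * iteratedDeriv (L - 1 - n)
                  (fun z => (g z * deriv χ z) * χ z ^ (L - 1 - n)) y))
        = ∑ n ∈ Finset.range L, ((L+1).choose (n+1) : ℝ)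
              * iteratedDeriv n (fun z => deriv h z * χ z ^ (n+1)) y
              * (iteratedDeriv (L - 1 - n)
                    (fun z => (deriv g z * χ z) * χ z ^ (L - 1 - n)) y
                 + (((L - 1 - n : ℕ) : ℝ) + 1) * iteratedDeriv (L - 1 - n)
                    (fun z => (g z * deriv χ z) * χ z ^ (L - 1 - n)) y) := by
      rw [Finset.mul_sum, ← Finset.sum_add_distrib, ← Finset.sum_add_distrib]
      refine Finset.sum_congr rfl fun n hn => ?_
      have hn' := Finset.mem_range.mp hn
      have f1 : ((L+1).choose (n+1) : ℝ) = (L.choose n : ℝ) + (L.choose (n+1) : ℝ) := by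
        exact_mod_cast congrArg (Nat.cast : ℕ → ℝ) (Nat.choose_succ_succ L n)
      have g2 := Nat.choose_mul_succ_eq L (n+1)
      rw [show L + 1 - (n+1) = (L - 1 - n) + 1 from by omega] at g2
      have f2 : ((L+1).choose (n+1) : ℝ) * (((L - 1 - n : ℕ) : ℝ) + 1)
          = ((L:ℝ)+1) * (L.choose (n+1) : ℝ) := by
        have := congrArg (Nat.cast : ℕ → ℝ) g2
        push_cast at this
        linarith
      linear_combination
        -(iteratedDeriv n (fun z => deriv h z * χ z ^ (n+1)) y
          * iteratedDeriv (L - 1 - n)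
              (fun z => (deriv g z * χ z) * χ z ^ (L - 1 - n)) y) * f1
        - (iteratedDeriv n (fun z => deriv h z * χ z ^ (n+1)) y
          * iteratedDeriv (L - 1 - n)
              (fun z => (g z * deriv χ z) * χ z ^ (L - 1 - n)) y) * f2
    -- assemble
    simp only [Nat.add_sub_cancel]
    rw [iteratedDeriv_succ', iteratedDeriv_succ']
    rw [deriv3 hh hg hχ L, deriv2 hg hχ L]
    rw [itd_add3 hA hB hC ((L:ℝ)+1) L y]
    rw [itd_add2 hD1 hD2 ((L:ℝ)+1) L y]
    rw [I1, I2, I3, E2]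
    linear_combination Esplit.symm + Efinal

theorem stmt15 (χ : ℝ → ℝ) (hχ : ContDiff ℝ (⊤ : ℕ∞) χ) (L : ℕ) (hL : 1 ≤ L) (y : ℝ) :
    iteratedDeriv L (fun z => deriv χ z * χ z ^ L) y
      - deriv χ y * iteratedDeriv L (fun z => χ z ^ L) y
      = ∑ ℓ ∈ Finset.range L,
          (Nat.choose L ℓ : ℝ)
            * iteratedDeriv ℓ (fun z => χ z ^ ℓ) y
            * iteratedDeriv (L - 1 - ℓ) (fun z => deriv (deriv χ) z * χ z ^ (L - ℓ)) y := by
  have hchiS : ContDiff ℝ ∞ χ := hχ.of_le (by simp)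
  have K : iteratedDeriv L (fun z => deriv χ z * 1 * χ z ^ L) y
      = deriv χ y * iteratedDeriv L (fun z => 1 * χ z ^ L) y
        + ∑ n ∈ Finset.range L, (L.choose (n+1) : ℝ)
            * iteratedDeriv n (fun z => deriv (deriv χ) z * χ z ^ (n+1)) y
            * iteratedDeriv (L - 1 - n) (fun z => (1:ℝ) * χ z ^ (L - 1 - n)) y :=
    keyS χ hchiS L (deriv χ) (fun _ => (1:ℝ)) (sdiff hchiS) contDiff_const y
  simp only [one_mul, mul_one] at K
  have R : (∑ n ∈ Finset.range L, (L.choose (n+1) : ℝ)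
            * iteratedDeriv n (fun z => deriv (deriv χ) z * χ z ^ (n+1)) y
            * iteratedDeriv (L - 1 - n) (fun z => χ z ^ (L - 1 - n)) y)
      = ∑ ℓ ∈ Finset.range L, (Nat.choose L ℓ : ℝ)
            * iteratedDeriv ℓ (fun z => χ z ^ ℓ) y
            * iteratedDeriv (L - 1 - ℓ) (fun z => deriv (deriv χ) z * χ z ^ (L - ℓ)) y := by
    conv_rhs => rw [← Finset.sum_range_reflect]
    refine Finset.sum_congr rfl fun n hn => ?_
    have hn' := Finset.mem_range.mp hn
    have e1 : L - 1 - (L - 1 - n) = n := by omega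
    have e2 : L - (L - 1 - n) = n + 1 := by omega
    have ch : L.choose (L - 1 - n) = L.choose (n+1) := by
      rw [show L - 1 - n = L - (n+1) from by omega, Nat.choose_symm (by omega : n+1 ≤ L)]
    rw [e1, e2, ch]
    ring
  linear_combination K + R
end

section
/- Let ξ = (ξ₁, ξ₂) ∈ ℝ² with ξ₁² + ξ₂² = 1, u⁰, H⁰ ∈ ℝ², τ ∈ ℝ with τ ≠ 0, and set a = ξ·u⁰, b = ξ·H⁰, c = τ + a; assume c² ≠ b². Suppose v = (v₁,v₂,v₃) ∈ ℝ³, B = (B₁,B₂,B₃) ∈ ℝ³ and p ∈ ℝ satisfy: (i) for j = 1,2: c·v_j + u⁰_j (ξ·v') − b·B_j − H⁰_j (ξ·B') + ξ_j p = 0, where v' = (v₁,v₂), B' = (B₁,B₂); (ii) c·v₃ − b·B₃ = 0; (iii) for j = 1,2: c·B_j + H⁰_j (ξ·v') − b·v_j − u⁰_j (ξ·B') = 0; (iv) −b·v₃ + c·B₃ = 0; (v) ξ·v' = 0. Then v = 0, B = 0 and p = 0. -/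
theorem stmt19 (ξ₁ ξ₂ u₁ u₂ h₁ h₂ τ a b c : ℝ)
    (hξ : ξ₁ ^ 2 + ξ₂ ^ 2 = 1) (hτ : τ ≠ 0)
    (ha : a = ξ₁ * u₁ + ξ₂ * u₂) (hb : b = ξ₁ * h₁ + ξ₂ * h₂) (hc : c = τ + a)
    (hcb : c ^ 2 ≠ b ^ 2)
    (v B : Fin 3 → ℝ) (p : ℝ)
    (h1 : c * v 0 + u₁ * (ξ₁ * v 0 + ξ₂ * v 1)
            - b * B 0 - h₁ * (ξ₁ * B 0 + ξ₂ * B 1) + ξ₁ * p = 0)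
    (h2 : c * v 1 + u₂ * (ξ₁ * v 0 + ξ₂ * v 1)
            - b * B 1 - h₂ * (ξ₁ * B 0 + ξ₂ * B 1) + ξ₂ * p = 0)
    (h3 : c * v 2 - b * B 2 = 0)
    (h4 : c * B 0 + h₁ * (ξ₁ * v 0 + ξ₂ * v 1)
            - b * v 0 - u₁ * (ξ₁ * B 0 + ξ₂ * B 1) = 0)
    (h5 : c * B 1 + h₂ * (ξ₁ * v 0 + ξ₂ * v 1)
            - b * v 1 - u₂ * (ξ₁ * B 0 + ξ₂ * B 1) = 0)
    (h6 : -b * v 2 + c * B 2 = 0)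
    (h7 : ξ₁ * v 0 + ξ₂ * v 1 = 0) :
    (∀ i, v i = 0) ∧ (∀ i, B i = 0) ∧ p = 0 := by

  have hd : c ^ 2 - b ^ 2 ≠ 0 := sub_ne_zero.mpr hcb
  have hs0 : τ * (ξ₁ * B 0 + ξ₂ * B 1) = 0 := by
    linear_combination ξ₁ * h4 + ξ₂ * h5 + (b - ξ₁ * h₁ - ξ₂ * h₂) * h7
      - (ξ₁ * B 0 + ξ₂ * B 1) * hc - (ξ₁ * B 0 + ξ₂ * B 1) * ha
  have hs : ξ₁ * B 0 + ξ₂ * B 1 = 0 := by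
    rcases mul_eq_zero.mp hs0 with h | h
    · exact absurd h hτ
    · exact h
  have hp : p = 0 := by
    linear_combination ξ₁ * h1 + ξ₂ * h2 + (b + ξ₁ * h₁ + ξ₂ * h₂) * hs
      - (c + ξ₁ * u₁ + ξ₂ * u₂) * h7 - p * hξ
  have hv0 : v 0 = 0 := by
    have : (c ^ 2 - b ^ 2) * v 0 = 0 := by
      linear_combination c * h1 + b * h4 - (c * u₁ + b * h₁) * h7
        + (c * h₁ + b * u₁) * hs - c * ξ₁ * hp
    exact (mul_eq_zero.mp this).resolve_left hd
  have hv1 : v 1 = 0 := by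
    have : (c ^ 2 - b ^ 2) * v 1 = 0 := by
      linear_combination c * h2 + b * h5 - (c * u₂ + b * h₂) * h7
        + (c * h₂ + b * u₂) * hs - c * ξ₂ * hp
    exact (mul_eq_zero.mp this).resolve_left hd
  have hv2 : v 2 = 0 := by
    have : (c ^ 2 - b ^ 2) * v 2 = 0 := by linear_combination c * h3 + b * h6
    exact (mul_eq_zero.mp this).resolve_left hd
  have hB0 : B 0 = 0 := by
    have : (c ^ 2 - b ^ 2) * B 0 = 0 := by
      linear_combination c * h4 + b * h1 - (c * h₁ + b * u₁) * h7
        + (c * u₁ + b * h₁) * hs - b * ξ₁ * hp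
    exact (mul_eq_zero.mp this).resolve_left hd
  have hB1 : B 1 = 0 := by
    have : (c ^ 2 - b ^ 2) * B 1 = 0 := by
      linear_combination c * h5 + b * h2 - (c * h₂ + b * u₂) * h7
        + (c * u₂ + b * h₂) * hs - b * ξ₂ * hp
    exact (mul_eq_zero.mp this).resolve_left hd
  have hB2 : B 2 = 0 := by
    have : (c ^ 2 - b ^ 2) * B 2 = 0 := by linear_combination c * h6 + b * h3
    exact (mul_eq_zero.mp this).resolve_left hd
  refine ⟨?_, ?_, hp⟩
  · intro i; fin_cases i <;> assumption
  · intro i; fin_cases i <;> assumption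
end
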